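/- arXiv:2409.00276 — 4 statements merged into one kernel-verified Lean document; each statement's English description precedes it below -/
import Mathlib

section
/- The ground-truth matrix Ā is a global minimizer over A ∈ ℝ^{n×m} of the loss g(A) = Σ_{t=0}^{T−1} ‖(Ā − A) f(x_t) + d̄_t‖₂ if and only if for every matrix Z ∈ ℝ^{m×n} it holds that Σ_{t∈K} d̂_tᵀ Zᵀ f(x_t) ≤ Σ_{t∈K^c} ‖Zᵀ f(x_t)‖₂. -/
open Matrix
open scoped BigOperators Classical

/-- Euclidean norm of a vector in `ℝ^k`. -/
noncomputable def e2norm {k : ℕ} (v : Fin k → ℝ) : ℝ := Real.sqrt (∑ i, (v i) ^ 2)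

/-- Normalized attack direction `d̂ = d / ‖d‖₂`. -/
noncomputable def dhat {k : ℕ} (v : Fin k → ℝ) : Fin k → ℝ := (e2norm v)⁻¹ • v

/-!
Write `u_t = B f(x_t)` for a direction `B = Ā - A`. The right derivative at `ε = 0` of
`ε ↦ ‖ε u + d‖` is `⟪d̂, u⟫` when `d ≠ 0` and `‖u‖` when `d = 0`, so the condition on `Z = -Bᵀ`
says exactly that every one-sided directional derivative of `g` at `Ā` is nonnegative.
This is necessary by the one-sided Fermat rule. It is sufficient because the same expression
bounds the increment of `g` from below: by Cauchy–Schwarz, `‖u + d‖ ≥ ⟪d̂, u + d⟫ = ‖d‖ + ⟪d̂, u⟫`.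
-/

open Set RealInnerProductSpace

theorem IsMinOn.hasDerivWithinAt_Ici_nonneg {g : ℝ → ℝ} {g' a : ℝ} (h : IsMinOn g (Ici a) a)
    (hg : HasDerivWithinAt g g' (Ici a) a) : 0 ≤ g' := by
  have hone : (1 : ℝ) ∈ posTangentConeAt (Ici a) a :=
    mem_posTangentConeAt_of_segment_subset
      ((segment_subset_Icc (by simp)).trans Icc_subset_Ici_self)
  simpa using IsLocalMinOn.hasFDerivWithinAt_nonneg h.localize hg.hasFDerivWithinAt hone

section InnerProductSpace

variable {E : Type*} [NormedAddCommGroup E] [InnerProductSpace ℝ E]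

/-- The right derivative at `0` of `ε ↦ ‖ε • u + d‖`. -/
noncomputable def normRightDeriv (d u : E) : ℝ := if d = 0 then ‖u‖ else ⟪‖d‖⁻¹ • d, u⟫

theorem norm_add_normRightDeriv_le (d u : E) : ‖d‖ + normRightDeriv d u ≤ ‖u + d‖ := by
  rw [normRightDeriv]
  split_ifs with hd
  · simp [hd]
  have hself : ⟪‖d‖⁻¹ • d, d⟫ = ‖d‖ := by
    rw [real_inner_smul_left, real_inner_self_eq_norm_sq]
    field_simp [norm_ne_zero_iff.2 hd]
  calc ‖d‖ + ⟪‖d‖⁻¹ • d, u⟫ = ⟪‖d‖⁻¹ • d, u + d⟫ := by rw [inner_add_right, hself, add_comm]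
    _ ≤ ‖‖d‖⁻¹ • d‖ * ‖u + d‖ := real_inner_le_norm _ _
    _ = ‖u + d‖ := by
      rw [norm_smul, norm_inv, norm_norm, inv_mul_cancel₀ (norm_ne_zero_iff.2 hd), one_mul]

theorem hasDerivAt_norm_smul_add {d : E} (hd : d ≠ 0) (u : E) :
    HasDerivAt (fun ε : ℝ ↦ ‖ε • u + d‖) ⟪‖d‖⁻¹ • d, u⟫ 0 := by
  have hline : HasDerivAt (fun ε : ℝ ↦ ε • u + d) u 0 := by
    simpa using ((hasDerivAt_id (0 : ℝ)).smul_const u).add_const d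
  have hsqrt := hline.norm_sq.sqrt (by simpa using hd)
  simp only [Real.sqrt_sq (norm_nonneg _), zero_smul, zero_add] at hsqrt
  convert hsqrt using 1
  rw [real_inner_smul_left]
  field_simp

theorem hasDerivWithinAt_norm_smul_add (d u : E) :
    HasDerivWithinAt (fun ε : ℝ ↦ ‖ε • u + d‖) (normRightDeriv d u) (Ici 0) 0 := by
  rw [normRightDeriv]
  split_ifs with hd
  · subst hd
    refine (((hasDerivWithinAt_id 0 (Ici 0)).mul_const ‖u‖).congr (fun ε hε ↦ ?_) (by simp))
      |>.congr_deriv (one_mul _)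
    simp [norm_smul, abs_of_nonneg (mem_Ici.1 hε)]
  · exact (hasDerivAt_norm_smul_add hd u).hasDerivWithinAt

variable {ι : Type*}

theorem sum_normRightDeriv_nonneg {s : Finset ι} {d u : ι → E}
    (hmin : ∀ ε : ℝ, 0 ≤ ε → ∑ t ∈ s, ‖d t‖ ≤ ∑ t ∈ s, ‖ε • u t + d t‖) :
    0 ≤ ∑ t ∈ s, normRightDeriv (d t) (u t) :=
  IsMinOn.hasDerivWithinAt_Ici_nonneg (fun ε hε ↦ by simpa using hmin ε hε)
    (HasDerivWithinAt.fun_sum fun t _ ↦ hasDerivWithinAt_norm_smul_add (d t) (u t))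

theorem forall_sum_norm_le_sum_norm_add_iff {V : Type*} [AddCommGroup V] [Module ℝ V]
    (s : Finset ι) (d : ι → E) (L : V →ₗ[ℝ] ι → E) :
    (∀ v, ∑ t ∈ s, ‖d t‖ ≤ ∑ t ∈ s, ‖L v t + d t‖) ↔
      ∀ v, 0 ≤ ∑ t ∈ s, normRightDeriv (d t) (L v t) := by
  refine ⟨fun hmin v ↦ sum_normRightDeriv_nonneg fun ε _ ↦ by simpa using hmin (ε • v),
    fun hslope v ↦ ?_⟩
  calc ∑ t ∈ s, ‖d t‖ ≤ ∑ t ∈ s, ‖d t‖ + ∑ t ∈ s, normRightDeriv (d t) (L v t) :=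
        le_add_of_nonneg_right (hslope v)
    _ ≤ ∑ t ∈ s, ‖L v t + d t‖ := by
      rw [← Finset.sum_add_distrib]
      exact Finset.sum_le_sum fun t _ ↦ norm_add_normRightDeriv_le (d t) (L v t)

end InnerProductSpace

theorem e2norm_eq_norm {k : ℕ} (v : Fin k → ℝ) : e2norm v = ‖WithLp.toLp 2 v‖ := by
  simp [e2norm, EuclideanSpace.norm_eq]

theorem e2norm_neg {k : ℕ} (v : Fin k → ℝ) : e2norm (-v) = e2norm v := by
  simp [e2norm_eq_norm]

theorem normRightDeriv_toLp {k : ℕ} (v w : Fin k → ℝ) :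
    normRightDeriv (WithLp.toLp 2 v) (WithLp.toLp 2 w) =
      if v ≠ 0 then dhat v ⬝ᵥ w else e2norm w := by
  rw [normRightDeriv, ite_not]
  simp [dhat, e2norm_eq_norm, real_inner_smul_left, EuclideanSpace.inner_toLp_toLp,
    dotProduct_comm]

theorem groundTruth_isGlobalMin_iff_general
    (T n m : ℕ)
    (f : (Fin n → ℝ) → (Fin m → ℝ))
    (Abar : Matrix (Fin n) (Fin m) ℝ)
    (d : ℕ → (Fin n → ℝ)) (x : ℕ → (Fin n → ℝ)) :
    (∀ A : Matrix (Fin n) (Fin m) ℝ,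
        ∑ t ∈ Finset.range T, e2norm ((Abar - Abar).mulVec (f (x t)) + d t) ≤
          ∑ t ∈ Finset.range T, e2norm ((Abar - A).mulVec (f (x t)) + d t))
      ↔
    (∀ Z : Matrix (Fin m) (Fin n) ℝ,
        ∑ t ∈ (Finset.range T).filter (fun t => d t ≠ 0),
            dhat (d t) ⬝ᵥ Zᵀ.mulVec (f (x t)) ≤
          ∑ t ∈ (Finset.range T).filter (fun t => d t = 0),
            e2norm (Zᵀ.mulVec (f (x t)))) := by
  let L : Matrix (Fin n) (Fin m) ℝ →ₗ[ℝ] ℕ → EuclideanSpace ℝ (Fin n) :=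
    { toFun B t := WithLp.toLp 2 (B *ᵥ f (x t))
      map_add' B C := by ext; simp [add_mulVec]
      map_smul' c B := by ext; simp [smul_mulVec] }
  have key := forall_sum_norm_le_sum_norm_add_iff (Finset.range T) (WithLp.toLp 2 ∘ d) L
  simp only [L, LinearMap.coe_mk, AddHom.coe_mk, Function.comp_apply, ← WithLp.toLp_add,
    ← e2norm_eq_norm, normRightDeriv_toLp, Finset.sum_ite, not_not] at key
  simp only [sub_self, zero_mulVec, zero_add]
  rw [← (Equiv.subLeft Abar).forall_congr_right]
  simp only [Equiv.subLeft_apply, sub_sub_cancel]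
  rw [key, ← ((transposeAddEquiv (Fin m) (Fin n) ℝ).toEquiv.trans (Equiv.neg _)).forall_congr_right]
  simp only [Equiv.trans_apply, AddEquiv.toEquiv_eq_coe, AddEquiv.coe_toEquiv,
    transposeAddEquiv_apply, Equiv.neg_apply, neg_mulVec, dotProduct_neg, Finset.sum_neg_distrib,
    e2norm_neg, le_neg_add_iff_le]

/-- Theorem 2.1, necessary and sufficient condition for optimality.
`Ā` is a global minimizer of `g(A) = Σ_{t<T} ‖(Ā − A) f(x_t) + d̄_t‖₂` iff for every
`Z ∈ ℝ^{m×n}`, `Σ_{t∈K} d̂_tᵀ Zᵀ f(x_t) ≤ Σ_{t∈K^c} ‖Zᵀ f(x_t)‖₂`. -/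
theorem groundTruth_isGlobalMin_iff
    (T n m : ℕ) (hT : 0 < T) (hn : 0 < n) (hm : 0 < m)
    (f : (Fin n → ℝ) → (Fin m → ℝ))
    (Abar : Matrix (Fin n) (Fin m) ℝ)
    (d : ℕ → (Fin n → ℝ)) (x : ℕ → (Fin n → ℝ))
    (hx0 : x 0 = 0)
    (hxstep : ∀ t < T, x (t + 1) = Abar.mulVec (f (x t)) + d t) :
    (∀ A : Matrix (Fin n) (Fin m) ℝ,
        ∑ t ∈ Finset.range T, e2norm ((Abar - Abar).mulVec (f (x t)) + d t) ≤
          ∑ t ∈ Finset.range T, e2norm ((Abar - A).mulVec (f (x t)) + d t))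
      ↔
    (∀ Z : Matrix (Fin m) (Fin n) ℝ,
        ∑ t ∈ (Finset.range T).filter (fun t => d t ≠ 0),
            dhat (d t) ⬝ᵥ Zᵀ.mulVec (f (x t)) ≤
          ∑ t ∈ (Finset.range T).filter (fun t => d t = 0),
            e2norm (Zᵀ.mulVec (f (x t)))) :=
  groundTruth_isGlobalMin_iff_general T n m f Abar d x
end

section
/- The ground-truth matrix Ā is a global minimizer over A ∈ ℝ^{n×m} of the loss g(A) = Σ_{t=0}^{T−1} ‖(Ā − A) f(x_t) + d̄_t‖₂ if and only if there exist vectors g_t ∈ ℝⁿ for t ∈ K^c with ‖g_t‖₂ ≤ 1 for every t ∈ K^c, such that Σ_{t∈K^c} f(x_t) g_tᵀ + Σ_{t∈K} f(x_t) d̂_tᵀ = 0_{m×n}. -/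
/-!
The loss `B ↦ ∑ₜ ‖B vₜ + dₜ‖` is convex, so `0` minimizes it iff its one-sided derivative
`∑_{dₜ = 0} ‖B vₜ‖ + ∑_{dₜ ≠ 0} ⟪d̂ₜ, B vₜ⟫` is nonnegative in every direction `B`: the derivative
bounds the increment from below, and along `ε B` the increment exceeds `ε` times it only by `O(ε²)`.
Under the trace pairing, `B ↦ ∑_{dₜ = 0} ‖B vₜ‖` is the support function of the compact convex set
`{∑_{dₜ = 0} vₜ gₜᵀ : ‖gₜ‖ ≤ 1}`, so by Hahn–Banach the derivative is nonnegative everywhere iff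
`-∑_{dₜ ≠ 0} vₜ d̂ₜᵀ` lies in that set.
-/

open Matrix
open scoped BigOperators Classical

instance Matrix.locallyConvexSpace {𝕜 R m n : Type*} [Semiring 𝕜] [PartialOrder 𝕜]
    [AddCommMonoid R] [TopologicalSpace R] [Module 𝕜 R] [LocallyConvexSpace 𝕜 R] :
    LocallyConvexSpace 𝕜 (Matrix m n R) :=
  Pi.locallyConvexSpace

theorem mem_of_forall_exists_apply_le {E : Type*} [TopologicalSpace E] [AddCommGroup E]
    [Module ℝ E] [IsTopologicalAddGroup E] [ContinuousSMul ℝ E] [LocallyConvexSpace ℝ E]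
    {C : Set E} (hconv : Convex ℝ C) (hclosed : IsClosed C) {p : E}
    (h : ∀ φ : StrongDual ℝ E, ∃ c ∈ C, φ p ≤ φ c) : p ∈ C := by
  by_contra hp
  obtain ⟨φ, u, hφC, hφp⟩ := geometric_hahn_banach_closed_point hconv hclosed hp
  obtain ⟨c, hc, hle⟩ := h φ
  linarith [hφC c hc]

section InnerProductSpace

variable {F : Type*} [NormedAddCommGroup F] [InnerProductSpace ℝ F]

-- The right-hand side equals `(‖d‖ ^ 2 + ‖w + d‖ ^ 2) / (2 * ‖d‖)`, so this is AM-GM.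
theorem norm_add_le_norm_add_inner_div_add_sq_div {d : F} (hd : d ≠ 0) (w : F) :
    ‖w + d‖ ≤ ‖d‖ + inner ℝ d w / ‖d‖ + ‖w‖ ^ 2 / (2 * ‖d‖) := by
  have hpos : 0 < ‖d‖ := norm_pos_iff.2 hd
  have hsq : ‖w + d‖ ^ 2 = ‖w‖ ^ 2 + 2 * inner ℝ d w + ‖d‖ ^ 2 := by
    rw [norm_add_sq_real, real_inner_comm]
  rw [show ‖d‖ + inner ℝ d w / ‖d‖ + ‖w‖ ^ 2 / (2 * ‖d‖) = (‖d‖ ^ 2 + ‖w + d‖ ^ 2) / (2 * ‖d‖) by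
    rw [hsq]; field_simp; ring, le_div_iff₀ (by positivity)]
  nlinarith [sq_nonneg (‖d‖ - ‖w + d‖)]

end InnerProductSpace

section EuclideanNorm

variable {k : ℕ}

theorem e2norm_eq_norm_toLp (v : Fin k → ℝ) : e2norm v = ‖WithLp.toLp 2 v‖ := by
  simp [e2norm, EuclideanSpace.norm_eq]

theorem dotProduct_eq_inner_toLp (u v : Fin k → ℝ) :
    u ⬝ᵥ v = inner ℝ (WithLp.toLp 2 u) (WithLp.toLp 2 v) := by
  rw [EuclideanSpace.inner_toLp_toLp, star_trivial, dotProduct_comm]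

theorem e2norm_smul {a : ℝ} (ha : 0 ≤ a) (v : Fin k → ℝ) : e2norm (a • v) = a * e2norm v := by
  rw [e2norm_eq_norm_toLp, e2norm_eq_norm_toLp, WithLp.toLp_smul, norm_smul, Real.norm_of_nonneg ha]

theorem e2norm_nonneg (v : Fin k → ℝ) : 0 ≤ e2norm v := Real.sqrt_nonneg _

theorem dotProduct_le_e2norm {g : Fin k → ℝ} (hg : e2norm g ≤ 1) (w : Fin k → ℝ) :
    g ⬝ᵥ w ≤ e2norm w := by
  rw [e2norm_eq_norm_toLp] at hg ⊢
  rw [dotProduct_eq_inner_toLp]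
  calc _ ≤ ‖WithLp.toLp 2 g‖ * ‖WithLp.toLp 2 w‖ := real_inner_le_norm _ _
    _ ≤ ‖WithLp.toLp 2 w‖ := mul_le_of_le_one_left (norm_nonneg _) hg

theorem dhat_dotProduct (d w : Fin k → ℝ) : dhat d ⬝ᵥ w = d ⬝ᵥ w / e2norm d := by
  rw [dhat, smul_dotProduct, smul_eq_mul, inv_mul_eq_div]

theorem dhat_dotProduct_self (v : Fin k → ℝ) : dhat v ⬝ᵥ v = e2norm v := by
  rw [dhat_dotProduct, dotProduct_eq_inner_toLp, real_inner_self_eq_norm_sq, ← e2norm_eq_norm_toLp]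
  rcases (e2norm_nonneg v).eq_or_lt with h | h
  · simp [← h]
  · field_simp

theorem e2norm_dhat_le_one (v : Fin k → ℝ) : e2norm (dhat v) ≤ 1 := by
  rw [dhat, e2norm_smul (inv_nonneg.2 (e2norm_nonneg v))]
  exact inv_mul_le_one_of_le₀ le_rfl (e2norm_nonneg v)

theorem e2norm_add_dhat_dotProduct_le (d w : Fin k → ℝ) :
    e2norm d + dhat d ⬝ᵥ w ≤ e2norm (w + d) := by
  calc e2norm d + dhat d ⬝ᵥ w = dhat d ⬝ᵥ (w + d) := by
        rw [dotProduct_add, dhat_dotProduct_self, add_comm]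
    _ ≤ e2norm (w + d) := dotProduct_le_e2norm (e2norm_dhat_le_one d) _

theorem e2norm_add_le {d : Fin k → ℝ} (hd : d ≠ 0) (w : Fin k → ℝ) :
    e2norm (w + d) ≤ e2norm d + dhat d ⬝ᵥ w + e2norm w ^ 2 / (2 * e2norm d) := by
  rw [dhat_dotProduct, dotProduct_eq_inner_toLp]
  simp only [e2norm_eq_norm_toLp, WithLp.toLp_add]
  exact norm_add_le_norm_add_inner_div_add_sq_div (by simpa using hd) _

end EuclideanNorm

section TracePairing

variable {R l m : Type*} [CommSemiring R] [Fintype l] [Fintype m]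

theorem trace_vecMulVec_mul (v : m → R) (g : l → R) (B : Matrix l m R) :
    trace (vecMulVec v g * B) = g ⬝ᵥ B *ᵥ v := by
  rw [vecMulVec_mul, trace_vecMulVec, dotProduct_mulVec, dotProduct_comm]

theorem trace_sum_vecMulVec_mul {ι : Type*} (s : Finset ι) (v : ι → m → R) (g : ι → l → R)
    (B : Matrix l m R) :
    trace ((∑ t ∈ s, vecMulVec (v t) (g t)) * B) = ∑ t ∈ s, g t ⬝ᵥ B *ᵥ v t := by
  simp only [Matrix.sum_mul, trace_sum, trace_vecMulVec_mul]

theorem LinearMap.exists_eq_trace_mul (φ : Matrix m l R →ₗ[R] R) :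
    ∃ B : Matrix l m R, ∀ X, φ X = Matrix.trace (X * B) := by
  classical
  refine ⟨of fun i j => φ (Matrix.single j i 1), fun X => ?_⟩
  conv_lhs => rw [matrix_eq_sum_single X]
  simp only [map_sum, Matrix.trace, diag_apply, mul_apply, of_apply]
  refine Finset.sum_congr rfl fun j _ => Finset.sum_congr rfl fun i _ => ?_
  rw [← smul_eq_mul, ← map_smul, smul_single, smul_eq_mul, mul_one]

end TracePairing

theorem setOf_e2norm_le_one_eq (k : ℕ) :
    {v : Fin k → ℝ | e2norm v ≤ 1} =
      WithLp.ofLp '' Metric.closedBall (0 : EuclideanSpace ℝ (Fin k)) 1 := by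
  ext v
  simp only [Set.mem_ofPred_eq, Set.mem_image, Metric.mem_closedBall, dist_zero_right,
    e2norm_eq_norm_toLp]
  exact ⟨fun hv => ⟨_, hv, rfl⟩, by rintro ⟨w, hw, rfl⟩; exact hw⟩

theorem isCompact_setOf_e2norm_le_one (k : ℕ) : IsCompact {v : Fin k → ℝ | e2norm v ≤ 1} := by
  rw [setOf_e2norm_le_one_eq]
  exact (isCompact_closedBall 0 1).image (PiLp.continuous_ofLp 2 _)

theorem convex_setOf_e2norm_le_one (k : ℕ) : Convex ℝ {v : Fin k → ℝ | e2norm v ≤ 1} := by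
  rw [setOf_e2norm_le_one_eq]
  exact (convex_closedBall 0 1).linear_image (WithLp.linearEquiv 2 ℝ (Fin k → ℝ)).toLinearMap

theorem exists_sum_vecMulVec_eq_of_trace_mul_le {ι : Type*} {m n : ℕ} (s : Finset ι)
    (v : ι → Fin m → ℝ) (P : Matrix (Fin m) (Fin n) ℝ)
    (h : ∀ B, Matrix.trace (P * B) ≤ ∑ t ∈ s, e2norm (B *ᵥ v t)) :
    ∃ g : ι → Fin n → ℝ, (∀ t, e2norm (g t) ≤ 1) ∧ ∑ t ∈ s, vecMulVec (v t) (g t) = P := by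
  set G := Set.univ.pi fun _ : ι => {w : Fin n → ℝ | e2norm w ≤ 1}
  set Φ := fun g : ι → Fin n → ℝ => ∑ t ∈ s, vecMulVec (v t) (g t)
  have hΦ : IsLinearMap ℝ Φ :=
    ⟨fun g g' => by simp only [Φ, Pi.add_apply, vecMulVec_add, Finset.sum_add_distrib],
      fun a g => by simp only [Φ, Pi.smul_apply, vecMulVec_smul, Finset.smul_sum]⟩
  have hconv : Convex ℝ (Φ '' G) :=
    (convex_pi fun _ _ => convex_setOf_e2norm_le_one n).is_linear_image hΦ
  have hclosed : IsClosed (Φ '' G) :=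
    ((isCompact_univ_pi fun _ => isCompact_setOf_e2norm_le_one n).image (by fun_prop)).isClosed
  obtain ⟨g, hg, hgP⟩ := mem_of_forall_exists_apply_le hconv hclosed fun φ => by
    obtain ⟨B, hB⟩ := φ.toLinearMap.exists_eq_trace_mul
    -- `gₜ = B vₜ / ‖B vₜ‖` attains the bound `∑ ‖B vₜ‖`.
    refine ⟨Φ fun t => dhat (B *ᵥ v t), ⟨_, fun t _ => e2norm_dhat_le_one _, rfl⟩, ?_⟩
    calc φ P = Matrix.trace (P * B) := hB P
      _ ≤ ∑ t ∈ s, e2norm (B *ᵥ v t) := h B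
      _ = ∑ t ∈ s, dhat (B *ᵥ v t) ⬝ᵥ B *ᵥ v t := by simp only [dhat_dotProduct_self]
      _ = Matrix.trace (Φ (fun t => dhat (B *ᵥ v t)) * B) := (trace_sum_vecMulVec_mul ..).symm
      _ = φ (Φ fun t => dhat (B *ᵥ v t)) := (hB _).symm
  exact ⟨g, fun t => hg t (Set.mem_univ t), hgP⟩

theorem nonneg_of_forall_pos_nonneg_mul_add_sq_mul {a b : ℝ}
    (h : ∀ ε > 0, 0 ≤ ε * a + ε ^ 2 * b) : 0 ≤ a := by
  have hdiv : ∀ ε > 0, 0 ≤ a + ε * b := fun ε hε =>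
    nonneg_of_mul_nonneg_right (by linarith [h ε hε]) hε
  have hlim : Filter.Tendsto (fun ε => a + ε * b) (nhdsWithin 0 (Set.Ioi 0)) (nhds a) := by
    have : Continuous fun ε : ℝ => a + ε * b := by fun_prop
    simpa using (this.tendsto 0).mono_left nhdsWithin_le_nhds
  exact ge_of_tendsto hlim (eventually_nhdsWithin_of_forall hdiv)

section ResidualLoss

variable {ι : Type*} {m n : ℕ} (s : Finset ι) (v : ι → Fin m → ℝ) (d : ι → Fin n → ℝ)

noncomputable def residualLoss (B : Matrix (Fin n) (Fin m) ℝ) : ℝ :=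
  ∑ t ∈ s, e2norm (B *ᵥ v t + d t)

/-- The one-sided directional derivative of `residualLoss` at `0` in direction `B`. -/
noncomputable def residualLossDeriv (B : Matrix (Fin n) (Fin m) ℝ) : ℝ :=
  ∑ t ∈ s with d t = 0, e2norm (B *ᵥ v t) + ∑ t ∈ s with d t ≠ 0, dhat (d t) ⬝ᵥ B *ᵥ v t

theorem residualLoss_zero : residualLoss s v d 0 = ∑ t ∈ s with d t ≠ 0, e2norm (d t) := by
  simp only [residualLoss, zero_mulVec, zero_add]
  refine (Finset.sum_filter_of_ne fun t _ hne => ?_).symm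
  rintro hd
  rw [hd, e2norm_eq_norm_toLp, WithLp.toLp_zero, norm_zero] at hne
  exact hne rfl

theorem residualLoss_zero_add_deriv_le (B : Matrix (Fin n) (Fin m) ℝ) :
    residualLoss s v d 0 + residualLossDeriv s v d B ≤ residualLoss s v d B := by
  rw [residualLoss_zero, residualLossDeriv, residualLoss,
    ← Finset.sum_filter_add_sum_filter_not s (fun t => d t = 0)]
  have hKc : ∑ t ∈ s with d t = 0, e2norm (B *ᵥ v t + d t) =
      ∑ t ∈ s with d t = 0, e2norm (B *ᵥ v t) :=
    Finset.sum_congr rfl fun t ht => by rw [(Finset.mem_filter.1 ht).2, add_zero]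
  have hK : ∑ t ∈ s with d t ≠ 0, (e2norm (d t) + dhat (d t) ⬝ᵥ B *ᵥ v t) ≤
      ∑ t ∈ s with d t ≠ 0, e2norm (B *ᵥ v t + d t) :=
    Finset.sum_le_sum fun t _ => e2norm_add_dhat_dotProduct_le _ _
  rw [Finset.sum_add_distrib] at hK
  linarith

theorem residualLoss_smul_le (B : Matrix (Fin n) (Fin m) ℝ) {ε : ℝ} (hε : 0 ≤ ε) :
    residualLoss s v d (ε • B) ≤ residualLoss s v d 0 + ε * residualLossDeriv s v d B +
      ε ^ 2 * ∑ t ∈ s with d t ≠ 0, e2norm (B *ᵥ v t) ^ 2 / (2 * e2norm (d t)) := by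
  rw [residualLoss_zero, residualLossDeriv, residualLoss,
    ← Finset.sum_filter_add_sum_filter_not s (fun t => d t = 0)]
  have hKc : ∑ t ∈ s with d t = 0, e2norm ((ε • B) *ᵥ v t + d t) =
      ε * ∑ t ∈ s with d t = 0, e2norm (B *ᵥ v t) := by
    rw [Finset.mul_sum]
    refine Finset.sum_congr rfl fun t ht => ?_
    rw [(Finset.mem_filter.1 ht).2, add_zero, smul_mulVec, e2norm_smul hε]
  have hK : ∑ t ∈ s with d t ≠ 0, e2norm ((ε • B) *ᵥ v t + d t) ≤
      ∑ t ∈ s with d t ≠ 0, (e2norm (d t) + ε * dhat (d t) ⬝ᵥ B *ᵥ v t +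
        ε ^ 2 * (e2norm (B *ᵥ v t) ^ 2 / (2 * e2norm (d t)))) := by
    refine Finset.sum_le_sum fun t ht => ?_
    have := e2norm_add_le (Finset.mem_filter.1 ht).2 (ε • B *ᵥ v t)
    rwa [dotProduct_smul, e2norm_smul hε, smul_eq_mul, mul_pow, mul_div_assoc,
      ← smul_mulVec] at this
  rw [Finset.sum_add_distrib, Finset.sum_add_distrib, ← Finset.mul_sum, ← Finset.mul_sum] at hK
  linarith

theorem forall_residualLoss_zero_le_iff :
    (∀ B, residualLoss s v d 0 ≤ residualLoss s v d B) ↔ ∀ B, 0 ≤ residualLossDeriv s v d B := by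
  refine ⟨fun h B => nonneg_of_forall_pos_nonneg_mul_add_sq_mul
    (b := ∑ t ∈ s with d t ≠ 0, e2norm (B *ᵥ v t) ^ 2 / (2 * e2norm (d t))) fun ε hε => ?_,
    fun h B => ?_⟩
  · linarith [h (ε • B), residualLoss_smul_le s v d B hε.le]
  · linarith [h B, residualLoss_zero_add_deriv_le s v d B]

theorem forall_residualLossDeriv_nonneg_iff :
    (∀ B, 0 ≤ residualLossDeriv s v d B) ↔
      ∃ g : ι → Fin n → ℝ, (∀ t ∈ s.filter (fun t => d t = 0), e2norm (g t) ≤ 1) ∧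
        ∑ t ∈ s with d t = 0, vecMulVec (v t) (g t) +
          ∑ t ∈ s with d t ≠ 0, vecMulVec (v t) (dhat (d t)) = 0 := by
  set M := ∑ t ∈ s with d t ≠ 0, vecMulVec (v t) (dhat (d t))
  have hderiv : ∀ B, residualLossDeriv s v d B =
      ∑ t ∈ s with d t = 0, e2norm (B *ᵥ v t) - Matrix.trace (-M * B) := fun B => by
    rw [residualLossDeriv, Matrix.neg_mul, trace_neg, sub_neg_eq_add, trace_sum_vecMulVec_mul]
  constructor
  · intro h
    obtain ⟨g, hg, hgM⟩ := exists_sum_vecMulVec_eq_of_trace_mul_le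
      (s.filter fun t => d t = 0) v (-M) fun B => sub_nonneg.1 (hderiv B ▸ h B)
    exact ⟨g, fun t _ => hg t, by rw [hgM, neg_add_cancel]⟩
  · rintro ⟨g, hg, hgM⟩ B
    rw [hderiv, ← eq_neg_of_add_eq_zero_left hgM, trace_sum_vecMulVec_mul, sub_nonneg]
    exact Finset.sum_le_sum fun t ht => dotProduct_le_e2norm (hg t ht) _

end ResidualLoss

theorem groundTruth_isGlobalMin_iff_subgradient_general
    (T n m : ℕ)
    (f : (Fin n → ℝ) → (Fin m → ℝ))
    (Abar : Matrix (Fin n) (Fin m) ℝ)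
    (d : ℕ → (Fin n → ℝ)) (x : ℕ → (Fin n → ℝ)) :
    (∀ A : Matrix (Fin n) (Fin m) ℝ,
        ∑ t ∈ Finset.range T, e2norm ((Abar - Abar).mulVec (f (x t)) + d t) ≤
          ∑ t ∈ Finset.range T, e2norm ((Abar - A).mulVec (f (x t)) + d t))
      ↔
    (∃ gvec : ℕ → (Fin n → ℝ),
        (∀ t ∈ (Finset.range T).filter (fun t => d t = 0), e2norm (gvec t) ≤ 1) ∧
        (∑ t ∈ (Finset.range T).filter (fun t => d t = 0),
              Matrix.vecMulVec (f (x t)) (gvec t))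
          + (∑ t ∈ (Finset.range T).filter (fun t => d t ≠ 0),
              Matrix.vecMulVec (f (x t)) (dhat (d t))) = 0) := by
  set v := fun t => f (x t)
  have hshift : (∀ A, residualLoss (Finset.range T) v d (Abar - Abar) ≤
      residualLoss (Finset.range T) v d (Abar - A)) ↔
      ∀ B, residualLoss (Finset.range T) v d 0 ≤ residualLoss (Finset.range T) v d B := by
    rw [sub_self]
    exact (Equiv.subLeft Abar).forall_congr_right
      (q := fun B => residualLoss (Finset.range T) v d 0 ≤ residualLoss (Finset.range T) v d B)
  exact hshift.trans <| (forall_residualLoss_zero_le_iff _ v d).trans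
    (forall_residualLossDeriv_nonneg_iff _ v d)

/-- subgradient optimality characterization.
`Ā` is a global minimizer of `g(A) = Σ_{t<T} ‖(Ā − A) f(x_t) + d̄_t‖₂` iff there exist
vectors `g_t ∈ ℝⁿ` for `t ∈ K^c` with `‖g_t‖₂ ≤ 1` such that
`Σ_{t∈K^c} f(x_t) g_tᵀ + Σ_{t∈K} f(x_t) d̂_tᵀ = 0_{m×n}`. -/
theorem groundTruth_isGlobalMin_iff_subgradient
    (T n m : ℕ) (hT : 0 < T) (hn : 0 < n) (hm : 0 < m)
    (f : (Fin n → ℝ) → (Fin m → ℝ))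
    (Abar : Matrix (Fin n) (Fin m) ℝ)
    (d : ℕ → (Fin n → ℝ)) (x : ℕ → (Fin n → ℝ))
    (hx0 : x 0 = 0)
    (hxstep : ∀ t < T, x (t + 1) = Abar.mulVec (f (x t)) + d t) :
    (∀ A : Matrix (Fin n) (Fin m) ℝ,
        ∑ t ∈ Finset.range T, e2norm ((Abar - Abar).mulVec (f (x t)) + d t) ≤
          ∑ t ∈ Finset.range T, e2norm ((Abar - A).mulVec (f (x t)) + d t))
      ↔
    (∃ gvec : ℕ → (Fin n → ℝ),
        (∀ t ∈ (Finset.range T).filter (fun t => d t = 0), e2norm (gvec t) ≤ 1) ∧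
        (∑ t ∈ (Finset.range T).filter (fun t => d t = 0),
              Matrix.vecMulVec (f (x t)) (gvec t))
          + (∑ t ∈ (Finset.range T).filter (fun t => d t ≠ 0),
              Matrix.vecMulVec (f (x t)) (dhat (d t))) = 0) :=
  groundTruth_isGlobalMin_iff_subgradient_general T n m f Abar d x
end

section
/- Consider the scalar first-order linear system (n = m = 1, f(x) = x): x₀ = 0 and x_{t+1} = ā x_t + d̄_t for t = 0,…,T−1 with ā ∈ ℝ and d̄_t ∈ ℝ. Then ā is the unique global minimizer over a ∈ ℝ of the loss g(a) = Σ_{t=0}^{T−1} |x_{t+1} − a x_t| if and only if |Σ_{t∈K} d̂_t x_t| < Σ_{t∈K^c} |x_t|. -/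
/-!
Write `a = ā + r`. Since `x_{t+1} - a x_t = d̄_t - r x_t`, the loss is
`φ r = Σ_t |d̄_t - r x_t|`. Each term with `d̄_t ≠ 0` is bounded below by its tangent line
`|d̄_t| - r d̂_t x_t`, with equality as long as `|r x_t| ≤ |d̄_t|`, while each term with
`d̄_t = 0` equals `|r| |x_t|`. Hence `φ r ≥ φ 0 - r S + |r| C` for all `r`, with equality
near `r = 0`, where `S = Σ_K d̂_t x_t` and `C = Σ_{K^c} |x_t|`. Such a function has a strict
global minimum at `0` exactly when both one-sided slopes `C - S` and `C + S` are positive.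
-/

open scoped BigOperators Classical

open Filter Topology

lemma div_abs_mul_self (d : ℝ) : d / |d| * d = |d| := by
  rw [div_mul_eq_mul_div, ← abs_mul_abs_self, mul_div_assoc]
  rcases eq_or_ne |d| 0 with h | h
  · simp [h]
  · rw [div_self h, mul_one]

lemma abs_div_abs_self {d : ℝ} (hd : d ≠ 0) : |(d / |d|)| = 1 := by
  rw [abs_div, abs_abs, div_self (abs_ne_zero.2 hd)]

lemma abs_sub_eq_div_abs_mul {d : ℝ} (hd : d ≠ 0) (y : ℝ) :
    |d - y| = |d / |d| * (d - y)| := by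
  rw [abs_mul, abs_div_abs_self hd, one_mul]

lemma abs_sub_div_abs_mul_le {d : ℝ} (hd : d ≠ 0) (y : ℝ) : |d| - d / |d| * y ≤ |d - y| := by
  calc |d| - d / |d| * y = d / |d| * (d - y) := by rw [mul_sub, div_abs_mul_self]
    _ ≤ |d / |d| * (d - y)| := le_abs_self _
    _ = |d - y| := (abs_sub_eq_div_abs_mul hd y).symm

lemma abs_sub_eq_abs_sub_div_abs_mul_of_abs_le {d y : ℝ} (hd : d ≠ 0) (hy : |y| ≤ |d|) :
    |d - y| = |d| - d / |d| * y := by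
  have hsign : d / |d| * y ≤ |y| :=
    (le_abs_self _).trans_eq (by rw [abs_mul, abs_div_abs_self hd, one_mul])
  rw [abs_sub_eq_div_abs_mul hd, mul_sub, div_abs_mul_self, abs_of_nonneg (by linarith)]

lemma forall_ne_lt_iff_abs_lt {f : ℝ → ℝ} {S C : ℝ}
    (hge : ∀ r, f 0 - r * S + |r| * C ≤ f r)
    (heq : ∀ᶠ r in 𝓝 0, f r = f 0 - r * S + |r| * C) :
    (∀ r ≠ 0, f 0 < f r) ↔ |S| < C := by
  constructor
  · intro hmin
    have hneg : Tendsto (fun r : ℝ => -r) (𝓝[>] 0) (𝓝 0) :=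
      (continuous_neg.tendsto' 0 0 neg_zero).mono_left nhdsWithin_le_nhds
    obtain ⟨r, hr, hfr, hfnr⟩ :=
      ((eventually_mem_nhdsWithin : ∀ᶠ r in 𝓝[>] (0 : ℝ), r ∈ Set.Ioi 0).and
        ((heq.filter_mono nhdsWithin_le_nhds).and (hneg.eventually heq))).exists
    have hr : (0 : ℝ) < r := hr
    have h₁ := hmin r hr.ne'
    have h₂ := hmin (-r) (neg_ne_zero.2 hr.ne')
    rw [hfr, abs_of_pos hr] at h₁
    rw [hfnr, abs_neg, abs_of_pos hr] at h₂
    exact abs_lt.2 ⟨by nlinarith, by nlinarith⟩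
  · intro hSC r hr
    have hslope : r * S ≤ |r| * |S| := (le_abs_self _).trans (abs_mul r S).le
    have := mul_lt_mul_of_pos_left hSC (abs_pos.2 hr)
    linarith [hge r]

section

variable {ι : Type*} (s : Finset ι) (d x : ι → ℝ)

lemma sum_abs_sub_mul_ge (r : ℝ) :
    ∑ t ∈ s, |d t| - r * ∑ t ∈ s.filter (fun t => d t ≠ 0), d t / |d t| * x t
        + |r| * ∑ t ∈ s.filter (fun t => d t = 0), |x t|
      ≤ ∑ t ∈ s, |d t - r * x t| := by
  simp only [Finset.sum_filter, Finset.mul_sum, ← Finset.sum_sub_distrib,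
    ← Finset.sum_add_distrib]
  refine Finset.sum_le_sum fun t _ => ?_
  by_cases hd : d t = 0
  · simp [hd, abs_mul]
  · have := abs_sub_div_abs_mul_le hd (r * x t)
    simp only [hd, if_false, if_true, ne_eq, not_false_eq_true, mul_zero, add_zero]
    linarith [show r * (d t / |d t| * x t) = d t / |d t| * (r * x t) by ring]

lemma eventually_sum_abs_sub_mul_eq :
    ∀ᶠ r in 𝓝 0, ∑ t ∈ s, |d t - r * x t| =
      ∑ t ∈ s, |d t| - r * ∑ t ∈ s.filter (fun t => d t ≠ 0), d t / |d t| * x t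
        + |r| * ∑ t ∈ s.filter (fun t => d t = 0), |x t| := by
  have hsmall : ∀ᶠ r in 𝓝 (0 : ℝ), ∀ t ∈ s, d t ≠ 0 → |r * x t| < |d t| := by
    refine (eventually_all_finset s).2 fun t _ => ?_
    by_cases hd : d t = 0
    · simp [hd]
    · have hcont : ContinuousAt (fun r : ℝ => |r * x t|) 0 := by fun_prop
      simpa [hd] using hcont.eventually_lt continuousAt_const (by simpa using hd)
  filter_upwards [hsmall] with r hr
  simp only [Finset.sum_filter, Finset.mul_sum, ← Finset.sum_sub_distrib,
    ← Finset.sum_add_distrib]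
  refine Finset.sum_congr rfl fun t ht => ?_
  by_cases hd : d t = 0
  · simp [hd, abs_mul]
  · rw [abs_sub_eq_abs_sub_div_abs_mul_of_abs_le hd (hr t ht hd).le]
    simp only [hd, if_false, if_true, ne_eq, not_false_eq_true, mul_zero, add_zero]
    ring

end

theorem scalar_unique_recovery_iff_general
    (T : ℕ)
    (abar : ℝ) (d : ℕ → ℝ) (x : ℕ → ℝ)
    (hxstep : ∀ t < T, x (t + 1) = abar * x t + d t) :
    (∀ a : ℝ, a ≠ abar →
        ∑ t ∈ Finset.range T, |x (t + 1) - abar * x t| <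
          ∑ t ∈ Finset.range T, |x (t + 1) - a * x t|)
      ↔
    |∑ t ∈ (Finset.range T).filter (fun t => d t ≠ 0), (d t / |d t|) * x t| <
      ∑ t ∈ (Finset.range T).filter (fun t => d t = 0), |x t| := by
  set φ : ℝ → ℝ := fun r => ∑ t ∈ Finset.range T, |d t - r * x t|
  have hloss : ∀ a, ∑ t ∈ Finset.range T, |x (t + 1) - a * x t| = φ (a - abar) :=
    fun a => Finset.sum_congr rfl fun t ht => by
      rw [hxstep t (Finset.mem_range.1 ht)]
      ring_nf
  have hφ0 : φ 0 = ∑ t ∈ Finset.range T, |d t| := by simp [φ]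
  simp only [hloss, sub_self]
  rw [← forall_ne_lt_iff_abs_lt (f := φ)
    (fun r => hφ0 ▸ sum_abs_sub_mul_ge _ d x r)
    (hφ0 ▸ eventually_sum_abs_sub_mul_eq _ d x)]
  exact ⟨fun h r hr => by simpa using h (r + abar) (by simpa using hr),
    fun h a ha => h _ (sub_ne_zero.2 ha)⟩

/-- first-order scalar linear system: exact uniqueness condition.
For `x₀ = 0`, `x_{t+1} = ā x_t + d̄_t`, the scalar `ā` is the unique global minimizer
of `g(a) = Σ_{t<T} |x_{t+1} − a x_t|` iff `|Σ_{t∈K} d̂_t x_t| < Σ_{t∈K^c} |x_t|`,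
where `d̂_t = d̄_t / |d̄_t|`. -/
theorem scalar_unique_recovery_iff
    (T : ℕ) (hT : 0 < T)
    (abar : ℝ) (d : ℕ → ℝ) (x : ℕ → ℝ)
    (hx0 : x 0 = 0)
    (hxstep : ∀ t < T, x (t + 1) = abar * x t + d t) :
    (∀ a : ℝ, a ≠ abar →
        ∑ t ∈ Finset.range T, |x (t + 1) - abar * x t| <
          ∑ t ∈ Finset.range T, |x (t + 1) - a * x t|)
      ↔
    |∑ t ∈ (Finset.range T).filter (fun t => d t ≠ 0), (d t / |d t|) * x t| <
      ∑ t ∈ (Finset.range T).filter (fun t => d t = 0), |x t| :=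
  scalar_unique_recovery_iff_general T abar d x hxstep
end

section
/- Let p ∈ (0,1), let T ≥ 2 be an integer, and let b₀, b₁, …, b_{T−1} be independent Bernoulli(p) random variables. Define K' := { t ∈ {1,…,T−1} : b_{t−1} = 1 and b_t = 0 }. Then P( |K'| ≤ 2 p(1−p) T ) ≥ 1 − exp( −p(1−p)⌈T/2⌉/3 ) − exp( −p(1−p)⌊T/2⌋/3 ). -/
/-!
For `t ≥ 1` the event `t ∈ K'` is `{b (t-1) = 1} ∩ {b t = 0}`, of probability `q = p(1-p)`.
Among the times of one parity these pairs of coordinates are disjoint, so the events are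
independent, and the multiplicative Chernoff bound with `λ = log 2` gives
`P(#(K' ∩ class) ≥ 2qN) ≤ exp(-qN/3)` for each class of size at most `N`. The two classes have
sizes at most `⌈T/2⌉` and `⌊T/2⌋`, which add up to `T`, so a union bound finishes the proof.
-/

open MeasureTheory ProbabilityTheory Real
open scoped Finset

section Independence

variable {Ω ι κ : Type*} [MeasurableSpace Ω] {μ : Measure Ω}

theorem ProbabilityTheory.iIndepFun.iIndepSet_preimage {β : ι → Type*}
    [∀ i, MeasurableSpace (β i)] {X : ∀ i, Ω → β i} (hX : iIndepFun X μ)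
    (hXm : ∀ i, Measurable (X i)) {A : ∀ i, Set (β i)} (hA : ∀ i, MeasurableSet (A i)) :
    iIndepSet (fun i => X i ⁻¹' A i) μ :=
  (iIndepSet_iff_meas_biInter fun i => hXm i (hA i)).2 fun _ =>
    hX.meas_biInter fun i _ => ⟨A i, hA i, rfl⟩

theorem ProbabilityTheory.iIndepSet.measure_biInter_inter_inl_inr {F : κ ⊕ κ → Set Ω}
    (hF : iIndepSet F μ) (s : Finset κ) :
    μ (⋂ k ∈ s, (F (.inl k) ∩ F (.inr k))) = ∏ k ∈ s, μ (F (.inl k)) * μ (F (.inr k)) := by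
  have h : ⋂ k ∈ s, (F (.inl k) ∩ F (.inr k)) = ⋂ j ∈ s.disjSum s, F j := by
    ext ω
    simp only [Set.mem_iInter, Set.mem_inter_iff, Sum.forall, Finset.inl_mem_disjSum,
      Finset.inr_mem_disjSum]
    exact ⟨fun h => ⟨fun k hk => (h k hk).1, fun k hk => (h k hk).2⟩,
      fun h k hk => ⟨h.1 k hk, h.2 k hk⟩⟩
  rw [h, hF.meas_biInter, Finset.prod_disjSum, Finset.prod_mul_distrib]

theorem ProbabilityTheory.iIndepSet.inter_inl_inr {F : κ ⊕ κ → Set Ω}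
    (hFm : ∀ j, MeasurableSet (F j)) (hF : iIndepSet F μ) :
    iIndepSet (fun k => F (.inl k) ∩ F (.inr k)) μ := by
  refine (iIndepSet_iff_meas_biInter fun k => (hFm _).inter (hFm _)).2 fun s => ?_
  rw [hF.measure_biInter_inter_inl_inr]
  refine Finset.prod_congr rfl fun k _ => ?_
  simpa using (hF.measure_biInter_inter_inl_inr {k}).symm

end Independence

theorem exp_mul_indicator_one {Ω : Type*} {E : Set Ω} (t : ℝ) :
    (fun ω => exp (t * E.indicator (fun _ => (1 : ℝ)) ω)) =
      fun ω => 1 + E.indicator (fun _ => exp t - 1) ω := by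
  ext ω
  by_cases h : ω ∈ E <;> simp [h]

section Chernoff

variable {Ω ι : Type*} [MeasurableSpace Ω] {μ : Measure Ω} [IsProbabilityMeasure μ]

theorem integrable_exp_mul_indicator_one {E : Set Ω} (hE : MeasurableSet E) (t : ℝ) :
    Integrable (fun ω => exp (t * E.indicator (fun _ => (1 : ℝ)) ω)) μ := by
  rw [exp_mul_indicator_one]
  exact (integrable_const 1).add
    ((integrable_indicator_iff hE).2 (integrableOn_const (measure_ne_top μ E)))

theorem mgf_indicator_one {E : Set Ω} (hE : MeasurableSet E) (t : ℝ) :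
    mgf (E.indicator fun _ => (1 : ℝ)) μ t = 1 + (exp t - 1) * μ.real E := by
  rw [mgf, exp_mul_indicator_one, integral_add (integrable_const 1)
      ((integrable_indicator_iff hE).2 (integrableOn_const (measure_ne_top μ E))),
    integral_const, integral_indicator_const _ hE]
  simp [mul_comm]

theorem measureReal_sum_indicator_ge_le {s : Finset ι} {E : ι → Set Ω}
    (hE : ∀ i, MeasurableSet (E i)) (hind : iIndepSet (fun i : s => E i) μ)
    {q : ℝ} (hq : ∀ i ∈ s, μ.real (E i) ≤ q) {t : ℝ} (ht : 0 ≤ t) (a : ℝ) :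
    μ.real {ω | a ≤ ∑ i ∈ s, (E i).indicator (fun _ => (1 : ℝ)) ω} ≤
      exp (-t * a) * (1 + (exp t - 1) * q) ^ #s := by
  set X : s → Ω → ℝ := fun i => (E i).indicator fun _ => 1
  have hXm : ∀ i, Measurable (X i) := fun i => measurable_const.indicator (hE i)
  have hsum : ∀ ω, ∑ i ∈ s, (E i).indicator (fun _ => (1 : ℝ)) ω = (∑ i, X i) ω := fun ω => by
    simp only [Finset.sum_apply, X]
    exact (Finset.sum_coe_sort s fun i => (E i).indicator (fun _ => (1 : ℝ)) ω).symm
  simp only [hsum]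
  refine (measure_ge_le_exp_mul_mgf a ht (hind.iIndepFun_indicator.integrable_exp_mul_sum hXm
    fun i _ => integrable_exp_mul_indicator_one (hE i) t)).trans ?_
  rw [hind.iIndepFun_indicator.mgf_sum hXm, ← Fintype.card_coe, ← Finset.card_univ,
    ← Finset.prod_const]
  gcongr with i
  · exact fun i _ => mgf_nonneg
  · rw [mgf_indicator_one (hE i)]
    gcongr
    · linarith [one_le_exp ht]
    · exact hq i i.2

theorem measure_two_mul_le_card_filter_mem_le {s : Finset ι} {E : ι → Set Ω}
    [∀ ω, DecidablePred fun i => ω ∈ E i]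
    (hE : ∀ i, MeasurableSet (E i)) (hind : iIndepSet (fun i : s => E i) μ)
    {q : ℝ} (hq0 : 0 ≤ q) (hq : ∀ i ∈ s, μ.real (E i) ≤ q) {N : ℕ} (hN : #s ≤ N) :
    μ {ω | 2 * q * N ≤ #{i ∈ s | ω ∈ E i}} ≤ ENNReal.ofReal (exp (-(q * N) / 3)) := by
  have hcount : ∀ ω, (#{i ∈ s | ω ∈ E i} : ℝ) = ∑ i ∈ s, (E i).indicator (fun _ => 1) ω :=
    fun ω => by simp [Set.indicator_apply]
  have hmgf : (1 + (exp (log 2) - 1) * q) ^ #s ≤ exp (q * N) :=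
    calc (1 + (exp (log 2) - 1) * q) ^ #s = (1 + q) ^ #s := by rw [exp_log two_pos]; ring
      _ ≤ exp q ^ #s := by gcongr; linarith [add_one_le_exp q]
      _ = exp (q * #s) := by rw [← exp_nat_mul, mul_comm]
      _ ≤ exp (q * N) := by gcongr
  -- `log 2 > 2 / 3` makes `exp (-2 q N log 2 + q N) ≤ exp (-q N / 3)`.
  have hexp : exp (-log 2 * (2 * q * N)) * exp (q * N) ≤ exp (-(q * N) / 3) := by
    rw [← exp_add]
    gcongr
    nlinarith [log_two_gt_d9, mul_nonneg hq0 N.cast_nonneg]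
  simp only [hcount]
  rw [← ENNReal.ofReal_toReal (measure_ne_top μ _)]
  gcongr
  exact (measureReal_sum_indicator_ge_le hE hind hq (log_nonneg one_le_two) _).trans
    ((mul_le_mul_of_nonneg_left hmgf (exp_nonneg _)).trans hexp)

end Chernoff

section Measure

variable {Ω : Type*} [MeasurableSpace Ω] {μ : Measure Ω} [IsProbabilityMeasure μ]

theorem ofReal_one_sub_sub_le_measure {S A B : Set Ω} (hS : Sᶜ ⊆ A ∪ B) {x y : ℝ}
    (hx : 0 ≤ x) (hy : 0 ≤ y) (hA : μ A ≤ ENNReal.ofReal x) (hB : μ B ≤ ENNReal.ofReal y) :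
    ENNReal.ofReal (1 - x - y) ≤ μ S := by
  have hcompl : μ Sᶜ ≤ ENNReal.ofReal x + ENNReal.ofReal y :=
    (measure_mono hS).trans ((measure_union_le A B).trans (add_le_add hA hB))
  calc ENNReal.ofReal (1 - x - y) = 1 - (ENNReal.ofReal x + ENNReal.ofReal y) := by
        rw [ENNReal.ofReal_sub _ hy, ENNReal.ofReal_sub _ hx, ENNReal.ofReal_one, tsub_tsub]
    _ ≤ 1 - μ Sᶜ := tsub_le_tsub_left hcompl 1
    _ ≤ μ S := by
        rw [tsub_le_iff_right, ← measure_univ (μ := μ)]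
        exact measure_univ_le_add_compl S

end Measure

section AttackProcess

def prevStep {T : ℕ} (t : Fin T) : Fin T :=
  ⟨(t : ℕ) - 1, lt_of_le_of_lt (Nat.sub_le _ _) t.isLt⟩

/-- The paper's event `t ∈ K'`. -/
def cleanAfterAttack {Ω : Type*} {T : ℕ} (b : Fin T → Ω → Bool) (t : Fin T) : Set Ω :=
  {ω | 1 ≤ (t : ℕ) ∧ b (prevStep t) ω = true ∧ b t ω = false}

-- Definitionally the instance of the defining predicate, so that the count in the main
-- theorem can be `change`d into a count of these events.
instance {Ω : Type*} {T : ℕ} (b : Fin T → Ω → Bool) (ω : Ω) :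
    DecidablePred fun t => ω ∈ cleanAfterAttack b t := fun t =>
  inferInstanceAs (Decidable (1 ≤ (t : ℕ) ∧ b (prevStep t) ω = true ∧ b t ω = false))

def stepsOfParity (T a : ℕ) : Finset (Fin T) :=
  {t | 1 ≤ (t : ℕ) ∧ (t : ℕ) % 2 = a}

@[simp]
theorem mem_stepsOfParity {T a : ℕ} {t : Fin T} :
    t ∈ stepsOfParity T a ↔ 1 ≤ (t : ℕ) ∧ (t : ℕ) % 2 = a := by
  simp [stepsOfParity]

theorem card_stepsOfParity_le (T a : ℕ) : #(stepsOfParity T a) ≤ (T + 1 - a) / 2 := by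
  rw [← Finset.card_range ((T + 1 - a) / 2)]
  refine Finset.card_le_card_of_injOn (fun t => (t : ℕ) / 2) (fun t ht => ?_)
    fun t ht t' ht' h => ?_
  · rw [Finset.mem_coe, mem_stepsOfParity] at ht
    simp only [Finset.coe_range, Set.mem_Iio]
    omega
  · rw [Finset.mem_coe, mem_stepsOfParity] at ht ht'
    exact Fin.ext (by simp only at h; omega)

theorem card_filter_eq_add_stepsOfParity {T : ℕ} (P : Fin T → Prop) [DecidablePred P]
    (hP : ∀ t, P t → 1 ≤ (t : ℕ)) :
    #{t | P t} = #{t ∈ stepsOfParity T 0 | P t} + #{t ∈ stepsOfParity T 1 | P t} := by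
  rw [← Finset.card_filter_add_card_filter_not (s := {t | P t}) (fun t => (t : ℕ) % 2 = 0),
    stepsOfParity, stepsOfParity, Finset.filter_filter, Finset.filter_filter, Finset.filter_filter]
  congr 2 <;> ext t <;>
    simp only [Nat.mod_two_not_eq_zero, Finset.mem_filter, Finset.mem_univ, true_and] <;>
    exact ⟨fun h => ⟨⟨hP t h.1, h.2⟩, h.1⟩, fun h => ⟨h.2, h.1.2⟩⟩

variable {Ω : Type*} {T : ℕ} {b : Fin T → Ω → Bool}

theorem cleanAfterAttack_eq_inter {t : Fin T} (ht : 1 ≤ (t : ℕ)) :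
    cleanAfterAttack b t = b (prevStep t) ⁻¹' {true} ∩ b t ⁻¹' {false} := by
  ext ω
  simp [cleanAfterAttack, ht]

variable [MeasurableSpace Ω] {μ : Measure Ω}

theorem measurableSet_cleanAfterAttack (hmeas : ∀ t, Measurable (b t)) (t : Fin T) :
    MeasurableSet (cleanAfterAttack b t) := by
  by_cases ht : 1 ≤ (t : ℕ)
  · rw [cleanAfterAttack_eq_inter ht]
    exact (hmeas _ (measurableSet_singleton _)).inter (hmeas _ (measurableSet_singleton _))
  · simp [cleanAfterAttack, ht]

theorem measureReal_cleanAfterAttack [IsProbabilityMeasure μ] (hmeas : ∀ t, Measurable (b t))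
    (hind : iIndepFun b μ) {p : ℝ} (hp : 0 ≤ p)
    (hbern : ∀ t, μ {ω | b t ω = true} = ENNReal.ofReal p) {t : Fin T} (ht : 1 ≤ (t : ℕ)) :
    μ.real (cleanAfterAttack b t) = p * (1 - p) := by
  have hne : prevStep t ≠ t := fun h => by simp only [prevStep, Fin.ext_iff] at h; omega
  have htrue : ∀ i, μ (b i ⁻¹' {true}) = ENNReal.ofReal p := hbern
  have hfalse : μ (b t ⁻¹' {false}) = 1 - ENNReal.ofReal p := by
    rw [← htrue t, ← prob_compl_eq_one_sub (hmeas t (measurableSet_singleton _))]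
    congr 1
    ext ω
    simp
  rw [measureReal_def, cleanAfterAttack_eq_inter ht,
    (hind.indepFun hne).measure_inter_preimage_eq_mul _ _ (measurableSet_singleton _)
      (measurableSet_singleton _), htrue, hfalse,
    ENNReal.toReal_mul, ENNReal.toReal_sub_of_le (htrue t ▸ prob_le_one) ENNReal.one_ne_top,
    ENNReal.toReal_ofReal hp, ENNReal.toReal_one]

theorem iIndepSet_cleanAfterAttack (hmeas : ∀ t, Measurable (b t)) (hind : iIndepFun b μ)
    {s : Finset (Fin T)} (hs : ∀ t ∈ s, 1 ≤ (t : ℕ))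
    (hsep : ∀ t ∈ s, ∀ t' ∈ s, (t : ℕ) ≠ t' + 1) :
    iIndepSet (fun t : s => cleanAfterAttack b t) μ := by
  let g : s ⊕ s → Fin T := Sum.elim (fun t => prevStep t) (fun t => t)
  have hg : g.Injective := by
    rintro (⟨i, hi⟩ | ⟨i, hi⟩) (⟨j, hj⟩ | ⟨j, hj⟩) h <;>
      simp only [g, prevStep, Sum.elim_inl, Sum.elim_inr, Fin.ext_iff, Sum.inl.injEq,
        Sum.inr.injEq, Subtype.mk.injEq, reduceCtorEq] at h ⊢ <;>
      have := hs i hi <;> have := hs j hj <;> have := hsep i hi j hj <;> have := hsep j hj i hi <;>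
      omega
  let A : s ⊕ s → Set Bool := Sum.elim (fun _ => {true}) (fun _ => {false})
  have hA : ∀ j, MeasurableSet (A j) := fun j => by cases j <;> exact measurableSet_singleton _
  have hF := (hind.precomp hg).iIndepSet_preimage (fun _ => hmeas _) hA
  convert hF.inter_inl_inr fun j => hmeas (g j) (hA j) using 2 with t
  exact cleanAfterAttack_eq_inter (hs t t.2)

end AttackProcess

theorem chernoff_clean_after_attack_general
    {Ω : Type*} [MeasurableSpace Ω] (μ : Measure Ω) [IsProbabilityMeasure μ]
    (p : ℝ) (hp : p ∈ Set.Ioo (0 : ℝ) 1) (T : ℕ)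
    (b : Fin T → Ω → Bool)
    (hmeas : ∀ t, Measurable (b t))
    (hind : ProbabilityTheory.iIndepFun b μ)
    (hbern : ∀ t, μ {ω | b t ω = true} = ENNReal.ofReal p) :
    ENNReal.ofReal
        (1 - Real.exp (-(p * (1 - p) * (((T + 1) / 2 : ℕ) : ℝ)) / 3)
           - Real.exp (-(p * (1 - p) * ((T / 2 : ℕ) : ℝ)) / 3)) ≤
      μ {ω |
          ((Finset.univ.filter (fun t : Fin T =>
              1 ≤ (t : ℕ) ∧
              b ⟨(t : ℕ) - 1, lt_of_le_of_lt (Nat.sub_le _ _) t.isLt⟩ ω = true ∧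
              b t ω = false)).card : ℝ)
            ≤ 2 * p * (1 - p) * T} := by
  change ENNReal.ofReal _ ≤ μ {ω | (#{t | ω ∈ cleanAfterAttack b t} : ℝ) ≤ _}
  have hq0 : 0 ≤ p * (1 - p) := mul_nonneg hp.1.le (by linarith [hp.2])
  have hparity : ∀ a N, (T + 1 - a) / 2 ≤ N →
      μ {ω | 2 * (p * (1 - p)) * N ≤ #{t ∈ stepsOfParity T a | ω ∈ cleanAfterAttack b t}} ≤
        ENNReal.ofReal (exp (-(p * (1 - p) * N) / 3)) := fun a N hN =>
    measure_two_mul_le_card_filter_mem_le (measurableSet_cleanAfterAttack hmeas)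
      (iIndepSet_cleanAfterAttack hmeas hind (fun t ht => (mem_stepsOfParity.1 ht).1)
        fun t ht t' ht' => by rw [mem_stepsOfParity] at ht ht'; omega)
      hq0 (fun t ht => (measureReal_cleanAfterAttack hmeas hind hp.1.le hbern
        (mem_stepsOfParity.1 ht).1).le) ((card_stepsOfParity_le T a).trans hN)
  refine ofReal_one_sub_sub_le_measure (fun ω hω => ?_) (exp_nonneg _) (exp_nonneg _)
    (hparity 0 _ (by omega)) (hparity 1 _ (by omega))
  have hsplit := card_filter_eq_add_stepsOfParity _ fun t (h : ω ∈ cleanAfterAttack b t) => h.1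
  have hT : (((T + 1) / 2 : ℕ) : ℝ) + ((T / 2 : ℕ) : ℝ) = T := by norm_cast; omega
  simp only [Set.mem_compl_iff, Set.mem_ofPred_eq, not_le] at hω
  by_contra! hcount
  simp only [Set.mem_union, Set.mem_ofPred_eq, not_le, not_or] at hcount
  rw [hsplit, ← hT] at hω
  push_cast at hω
  linarith

/-- Chernoff bound on clean steps following attacks.
Let `b₀,…,b_{T−1}` be independent `Bernoulli(p)` indicators and
`K' = {t ∈ {1,…,T−1} : b_{t−1} = 1, b_t = 0}`. Then
`P(|K'| ≤ 2p(1−p)T) ≥ 1 − exp(−p(1−p)⌈T/2⌉/3) − exp(−p(1−p)⌊T/2⌋/3)`. -/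
theorem chernoff_clean_after_attack
    {Ω : Type*} [MeasurableSpace Ω] (μ : Measure Ω) [IsProbabilityMeasure μ]
    (p : ℝ) (hp : p ∈ Set.Ioo (0 : ℝ) 1) (T : ℕ) (hT : 2 ≤ T)
    (b : Fin T → Ω → Bool)
    (hmeas : ∀ t, Measurable (b t))
    (hind : ProbabilityTheory.iIndepFun b μ)
    (hbern : ∀ t, μ {ω | b t ω = true} = ENNReal.ofReal p) :
    ENNReal.ofReal
        (1 - Real.exp (-(p * (1 - p) * (((T + 1) / 2 : ℕ) : ℝ)) / 3)
           - Real.exp (-(p * (1 - p) * ((T / 2 : ℕ) : ℝ)) / 3)) ≤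
      μ {ω |
          ((Finset.univ.filter (fun t : Fin T =>
              1 ≤ (t : ℕ) ∧
              b ⟨(t : ℕ) - 1, lt_of_le_of_lt (Nat.sub_le _ _) t.isLt⟩ ω = true ∧
              b t ω = false)).card : ℝ)
            ≤ 2 * p * (1 - p) * T} :=
  chernoff_clean_after_attack_general μ p hp T b hmeas hind hbern
end
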